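/- The dimension of the irreducible representation of S_n indexed by a partition λ ⊢ n equals n! divided by the product of the hook lengths h_{i,j}^λ over all cells (i,j) of the Young diagram of λ; equivalently, the number of standard Young tableaux of shape λ equals n! / ∏_{(i,j)∈λ} h_{i,j}^λ. -/

import Mathlib

/-- The hook length of the cell `(i,j)` (0-indexed) of a Young diagram `μ`:
`h = (λ_i − (j+1)) + (λ'_j − (i+1)) + 1` where `λ_i = μ.rowLen i`, `λ'_j = μ.colLen j`. -/
def hookLength (μ : YoungDiagram) (i j : ℕ) : ℕ :=
  (μ.rowLen i - (j + 1)) + (μ.colLen j - (i + 1)) + 1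

/-- A standard Young tableau of shape `μ`: a bijective filling of the cells of `μ`
by `0, …, n−1` that is strictly increasing along rows and along columns. -/
def IsStandardYoungTableau (μ : YoungDiagram)
    (f : {c : ℕ × ℕ // c ∈ μ.cells} → Fin μ.card) : Prop :=
  Function.Bijective f ∧
    (∀ a b : {c : ℕ × ℕ // c ∈ μ.cells}, a.1.1 = b.1.1 → a.1.2 < b.1.2 → (f a : ℕ) < f b) ∧
    (∀ a b : {c : ℕ × ℕ // c ∈ μ.cells}, a.1.2 = b.1.2 → a.1.1 < b.1.1 → (f a : ℕ) < f b)

/-!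
Every standard tableau of shape `μ` puts its largest entry in a corner, so the number `f^μ` of
tableaux satisfies `f^μ = ∑_c f^{μ ∖ c}` over the corners `c`. Removing the corner `c = (a, b)`
shortens by one exactly the hooks of the cells in row `a` and column `b`, so the hook product
`H` satisfies `H(μ) / H(μ ∖ c) = ∏_{x < a} (1 + 1/(h_{x,b} - 1)) ∏_{y < b} (1 + 1/(h_{a,y} - 1))`,
and by induction the formula reduces to `∑_c H(μ) / H(μ ∖ c) = n`.

This identity follows from the hook walk of Greene, Nijenhuis and Wilf. For a cell `v` and a
corner `c`, the probability that the hook walk started at `v` ends at `c` has a product form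
whose sum over all starting cells `v` is exactly `H(μ) / H(μ ∖ c)`. The walk's one-step
recursion `(h_v - 1) P(v) = ∑_{u in the hook of v, u ≠ v} P(u)` holds for these probabilities,
and by induction on `h_v` it follows that for every `v` the probabilities of ending at the
various corners add up to `1`. Summing over the `n` cells `v` gives `n`.
-/

open Finset
open scoped Nat

namespace Finset

variable {α : Type*} [PartialOrder α] {s : Finset α} {m : α}

def IsLinearExtension (s : Finset α) (f : s → Fin #s) : Prop :=
  Function.Bijective f ∧ StrictMono f

theorem isLinearExtension_of_injective {f : s → Fin #s} (hinj : Function.Injective f)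
    (hf : StrictMono f) : s.IsLinearExtension f :=
  ⟨(Fintype.bijective_iff_injective_and_card f).2 ⟨hinj, by simp⟩, hf⟩

theorem IsLinearExtension.maximal_of_val_add_one_eq_card {f : s → Fin #s}
    (hf : s.IsLinearExtension f) {x : s} (hx : (f x : ℕ) + 1 = #s) : Maximal (· ∈ s) x.1 := by
  refine ⟨x.2, fun y hy hxy => ?_⟩
  by_contra hyx
  have hlt := hf.2 (show x < ⟨y, hy⟩ from lt_of_le_not_ge hxy hyx)
  have := (f ⟨y, hy⟩).2
  rw [Fin.lt_def] at hlt
  omega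

theorem card_linearExtensions_empty :
    Nat.card {f : (∅ : Finset α) → Fin #(∅ : Finset α) // IsLinearExtension ∅ f} = 1 := by
  refine Nat.card_eq_one_iff_unique.2 ⟨inferInstance, ⟨⟨isEmptyElim, ?_, isEmptyElim⟩⟩⟩
  exact ⟨isEmptyElim, fun i => i.elim0⟩

variable [DecidableEq α]

def extendByTop (hm : m ∈ s) (g : s.erase m → Fin #(s.erase m)) : s → Fin #s := fun x =>
  if h : x.1 = m then ⟨#(s.erase m), card_erase_lt_of_mem hm⟩
  else ⟨g ⟨x, mem_erase.2 ⟨h, x.2⟩⟩, (g _).2.trans (card_erase_lt_of_mem hm)⟩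

theorem isLinearExtension_extendByTop (hm : Maximal (· ∈ s) m)
    {g : s.erase m → Fin #(s.erase m)} (hg : (s.erase m).IsLinearExtension g) :
    s.IsLinearExtension (extendByTop hm.1 g) := by
  have hval (x : s) (hx : x.1 ≠ m) : (extendByTop hm.1 g x : ℕ) < #(s.erase m) := by
    simp only [extendByTop, dif_neg hx]
    exact (g _).2
  refine isLinearExtension_of_injective (fun x y hxy => ?_) (fun x y hxy => ?_)
  · by_cases hx : x.1 = m <;> by_cases hy : y.1 = m
    · exact Subtype.ext (hx.trans hy.symm)
    · have := hval y hy
      simp only [extendByTop, dif_pos hx, dif_neg hy, Fin.ext_iff] at hxy this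
      omega
    · have := hval x hx
      simp only [extendByTop, dif_pos hy, dif_neg hx, Fin.ext_iff] at hxy this
      omega
    · simp only [extendByTop, dif_neg hx, dif_neg hy, Fin.mk.injEq, Fin.val_inj] at hxy
      simpa using hg.1.1 hxy
  · have hx : x.1 ≠ m := by
      rintro hx
      have hyx : y.1 ≤ x.1 := hx ▸ hm.2 y.2 (hx ▸ hxy.le)
      exact not_le_of_gt hxy hyx
    by_cases hy : y.1 = m
    · simpa [Fin.lt_def, extendByTop, hy] using hval x hx
    · simp only [extendByTop, dif_neg hx, dif_neg hy, Fin.mk_lt_mk, Fin.val_fin_lt]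
      exact hg.2 hxy

def restrictErase (hm : m ∈ s) (f : s → Fin #s) (hf : Function.Injective f)
    (htop : (f ⟨m, hm⟩ : ℕ) = #(s.erase m)) : s.erase m → Fin #(s.erase m) := fun x =>
  ⟨f ⟨x, mem_of_mem_erase x.2⟩, by
    have hne : f ⟨x, mem_of_mem_erase x.2⟩ ≠ f ⟨m, hm⟩ :=
      hf.ne fun h => ne_of_mem_erase x.2 (congrArg Subtype.val h)
    have hlt := (f ⟨x, mem_of_mem_erase x.2⟩).2
    have hcard := card_erase_add_one hm
    rw [Ne, Fin.ext_iff] at hne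
    omega⟩

def linearExtensionEraseEquiv (hm : Maximal (· ∈ s) m) :
    {f : {f : s → Fin #s // s.IsLinearExtension f} // (f.1 ⟨m, hm.1⟩ : ℕ) = #(s.erase m)} ≃
      {g : s.erase m → Fin #(s.erase m) // (s.erase m).IsLinearExtension g} where
  toFun f := ⟨restrictErase hm.1 f.1.1 f.1.2.1.1 f.2,
    isLinearExtension_of_injective
      (fun x y hxy => by
        rw [restrictErase, restrictErase, Fin.mk.injEq, Fin.val_inj] at hxy
        simpa using f.1.2.1.1 hxy)
      (fun x y hxy => f.1.2.2 hxy)⟩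
  invFun g := ⟨⟨extendByTop hm.1 g.1, isLinearExtension_extendByTop hm g.2⟩, by simp [extendByTop]⟩
  left_inv f := by
    ext x
    by_cases hx : x.1 = m
    · obtain rfl : x = ⟨m, hm.1⟩ := Subtype.ext hx
      simp [extendByTop, f.2]
    · simp [extendByTop, restrictErase, hx]
  right_inv g := by
    ext x
    simp [extendByTop, restrictErase, ne_of_mem_erase x.2]

open Classical in
theorem card_linearExtensions_eq_sum_maximal (hs : s.Nonempty) :
    Nat.card {f : s → Fin #s // s.IsLinearExtension f} =
      ∑ m ∈ s with Maximal (· ∈ s) m,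
        Nat.card {g : s.erase m → Fin #(s.erase m) // (s.erase m).IsLinearExtension g} := by
  let E := {f : s → Fin #s // s.IsLinearExtension f}
  have hpos := hs.card_pos
  let top (f : E) : s := (Equiv.ofBijective f.1 f.2.1).symm ⟨#s - 1, by omega⟩
  have htop (f : E) : f.1 (top f) = ⟨#s - 1, by omega⟩ := Equiv.ofBijective_apply_symm_apply _ _ _
  have hfiber (f : E) {m : α} (hm : m ∈ s) :
      (top f).1 = m ↔ (f.1 ⟨m, hm⟩ : ℕ) = #(s.erase m) := by
    rw [show (top f).1 = m ↔ top f = ⟨m, hm⟩ from (Subtype.ext_iff (a2 := ⟨m, hm⟩)).symm,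
      ← f.2.1.1.eq_iff, htop, Fin.ext_iff, card_erase_of_mem hm, eq_comm]
  have hmax (f : E) : (top f).1 ∈ s.filter (Maximal (· ∈ s)) :=
    mem_filter.2 ⟨(top f).2, f.2.maximal_of_val_add_one_eq_card (by rw [htop]; simp only; omega)⟩
  rw [Nat.card_eq_fintype_card, ← card_univ,
    card_eq_sum_card_fiberwise (f := fun f => (top f).1) fun f _ => hmax f]
  refine sum_congr rfl fun m hm => ?_
  have hm := (mem_filter.1 hm).2
  rw [← Nat.card_congr (linearExtensionEraseEquiv hm), ← Fintype.card_subtype,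
    ← Nat.card_eq_fintype_card]
  exact Nat.card_congr (Equiv.subtypeEquivRight fun f => hfiber f hm.1)

end Finset

section HookWalk

variable {K : Type*} [Field K] (f : ℕ → K) (a : ℕ)

def walkWeight (x : ℕ) : K :=
  if x = a then 1 else (f x)⁻¹ * ∏ i ∈ Ico (x + 1) a, (1 + (f i)⁻¹)

theorem sum_walkWeight {t : ℕ} (ht : t ≤ a) :
    ∑ x ∈ Ico t (a + 1), walkWeight f a x = ∏ i ∈ Ico t a, (1 + (f i)⁻¹) := by
  induction ht using Nat.decreasingInduction with
  | self => simp [walkWeight]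
  | of_succ t ht ih =>
    rw [sum_eq_sum_Ico_succ_bot (by omega), ih, prod_eq_prod_Ico_succ_bot ht, walkWeight,
      if_neg ht.ne]
    ring

theorem mul_walkWeight (ha : f a = 0) (hf : ∀ i < a, f i ≠ 0) {x : ℕ} (hx : x ≤ a) :
    f x * walkWeight f a x = ∑ i ∈ Ico (x + 1) (a + 1), walkWeight f a i := by
  rcases hx.eq_or_lt with rfl | hx
  · simp [ha]
  · rw [sum_walkWeight f a hx, walkWeight, if_neg hx.ne, mul_inv_cancel_left₀ (hf x hx)]

end HookWalk

namespace YoungDiagram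

variable {μ : YoungDiagram} {c u v : ℕ × ℕ}

theorem isStandardYoungTableau_iff {f : μ.cells → Fin μ.card} :
    IsStandardYoungTableau μ f ↔ μ.cells.IsLinearExtension f := by
  refine ⟨fun ⟨hbij, hrow, hcol⟩ => ⟨hbij, ?_⟩, fun ⟨hbij, hmono⟩ => ⟨hbij, ?_, ?_⟩⟩
  · refine Monotone.strictMono_of_injective (fun u w huw => ?_) hbij.1
    have hmid : (u.1.1, w.1.2) ∈ μ.cells := μ.up_left_mem huw.1 le_rfl w.2
    have hle (x y : μ.cells) (hxy : x ≤ y) (hr : x.1.1 = y.1.1 ∨ x.1.2 = y.1.2) : f x ≤ f y := by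
      rcases eq_or_ne x y with rfl | hne
      · exact le_rfl
      have hlt : x.1 < y.1 := lt_of_le_of_ne hxy (Subtype.coe_ne_coe.2 hne)
      rw [Prod.lt_iff] at hlt
      rcases hr with hr | hr
      · exact (hrow x y hr (by omega)).le
      · exact (hcol x y hr (by omega)).le
    exact (hle u ⟨_, hmid⟩ ⟨le_rfl, huw.2⟩ (.inl rfl)).trans
      (hle ⟨_, hmid⟩ w ⟨huw.1, le_rfl⟩ (.inr rfl))
  · exact fun u w hr hlt => hmono (Prod.lt_iff.2 (.inr ⟨hr.le, hlt⟩))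
  · exact fun u w hc hlt => hmono (Prod.lt_iff.2 (.inl ⟨hlt, hc.le⟩))

theorem hookLength_pos (i j : ℕ) : 0 < hookLength μ i j := by
  unfold hookLength
  omega

theorem hookLength_lt_of_lt (hv : v ∈ μ) (huv : u < v) :
    hookLength μ v.1 v.2 < hookLength μ u.1 u.2 := by
  have := mem_iff_lt_rowLen.1 hv
  have := mem_iff_lt_colLen.1 hv
  have := μ.rowLen_anti _ _ huv.le.1
  have := μ.colLen_anti _ _ huv.le.2
  rw [Prod.lt_iff] at huv
  unfold hookLength
  omega

theorem maximal_iff_hookLength_eq_one (hc : c ∈ μ) :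
    Maximal (· ∈ μ.cells) c ↔ hookLength μ c.1 c.2 = 1 := by
  have := mem_iff_lt_rowLen.1 hc
  have := mem_iff_lt_colLen.1 hc
  refine ⟨fun hmax => ?_, fun h1 => ⟨hc, fun d hd hcd => ?_⟩⟩
  · have hright : (c.1, c.2 + 1) ∉ μ := fun h => by
      simpa [Prod.le_def] using (hmax.2 h (by simp [Prod.le_def])).2
    have hdown : (c.1 + 1, c.2) ∉ μ := fun h => by
      simpa [Prod.le_def] using (hmax.2 h (by simp [Prod.le_def])).1
    rw [mem_iff_lt_rowLen] at hright
    rw [mem_iff_lt_colLen] at hdown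
    unfold hookLength
    omega
  · have := mem_iff_lt_rowLen.1 (μ.up_left_mem hcd.1 le_rfl hd)
    have := mem_iff_lt_colLen.1 (μ.up_left_mem le_rfl hcd.2 hd)
    unfold hookLength at h1
    exact ⟨by omega, by omega⟩

theorem one_lt_hookLength_of_lt (hc : Maximal (· ∈ μ.cells) c) (hv : v < c) :
    1 < hookLength μ v.1 v.2 :=
  (maximal_iff_hookLength_eq_one hc.1).1 hc ▸ hookLength_lt_of_lt hc.1 hv

theorem rowLen_of_maximal (hc : Maximal (· ∈ μ.cells) c) : μ.rowLen c.1 = c.2 + 1 := by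
  have h1 := (maximal_iff_hookLength_eq_one hc.1).1 hc
  have := mem_iff_lt_rowLen.1 hc.1
  unfold hookLength at h1
  omega

theorem colLen_of_maximal (hc : Maximal (· ∈ μ.cells) c) : μ.colLen c.2 = c.1 + 1 := by
  have h1 := (maximal_iff_hookLength_eq_one hc.1).1 hc
  have := mem_iff_lt_colLen.1 hc.1
  unfold hookLength at h1
  omega

open Classical in
noncomputable def corners (μ : YoungDiagram) : Finset (ℕ × ℕ) :=
  {c ∈ μ.cells | Maximal (· ∈ μ.cells) c}

theorem mem_corners : c ∈ μ.corners ↔ Maximal (· ∈ μ.cells) c := by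
  classical
  exact mem_filter.trans (and_iff_right_of_imp fun h => h.1)

/-- Removes the cells weakly below and to the right of `c`, hence exactly `c` when `c` is a
corner; defined for every `c` so that it can be summed over the corners. -/
def eraseCorner (μ : YoungDiagram) (c : ℕ × ℕ) : YoungDiagram where
  cells := {d ∈ μ.cells | ¬c ≤ d}
  isLowerSet d e hde he := by
    simp only [coe_filter, Set.mem_ofPred_eq] at he ⊢
    exact ⟨μ.isLowerSet hde he.1, fun hcd => he.2 (hcd.trans hde)⟩

theorem cells_eraseCorner (hc : Maximal (· ∈ μ.cells) c) :
    (μ.eraseCorner c).cells = μ.cells.erase c := by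
  ext d
  simp only [eraseCorner, mem_filter, mem_erase]
  exact ⟨fun ⟨hd, hcd⟩ => ⟨fun h => hcd (h ▸ le_rfl), hd⟩,
    fun ⟨hne, hd⟩ => ⟨hd, fun hcd => hne (le_antisymm (hc.2 hd hcd) hcd)⟩⟩

theorem mem_eraseCorner (hc : Maximal (· ∈ μ.cells) c) :
    v ∈ μ.eraseCorner c ↔ v ≠ c ∧ v ∈ μ := by
  rw [← mem_cells, cells_eraseCorner hc, mem_erase, mem_cells]

theorem rowLen_eraseCorner (hc : Maximal (· ∈ μ.cells) c) (i : ℕ) :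
    (μ.eraseCorner c).rowLen i = μ.rowLen i - if i = c.1 then 1 else 0 := by
  refine eq_of_forall_lt_iff fun j => ?_
  rw [← mem_iff_lt_rowLen, mem_eraseCorner hc, mem_iff_lt_rowLen, Ne, Prod.ext_iff]
  have := rowLen_of_maximal hc
  split_ifs with h
  · subst h
    omega
  · omega

theorem colLen_eraseCorner (hc : Maximal (· ∈ μ.cells) c) (j : ℕ) :
    (μ.eraseCorner c).colLen j = μ.colLen j - if j = c.2 then 1 else 0 := by
  refine eq_of_forall_lt_iff fun i => ?_
  rw [← mem_iff_lt_colLen, mem_eraseCorner hc, mem_iff_lt_colLen, Ne, Prod.ext_iff]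
  have := colLen_of_maximal hc
  split_ifs with h
  · subst h
    omega
  · omega

theorem hookLength_eraseCorner (hc : Maximal (· ∈ μ.cells) c) (hv : v ∈ μ.eraseCorner c) :
    hookLength μ v.1 v.2 =
      hookLength (μ.eraseCorner c) v.1 v.2 + (if v.1 = c.1 then 1 else 0) +
        if v.2 = c.2 then 1 else 0 := by
  rw [mem_eraseCorner hc] at hv
  unfold hookLength
  rw [rowLen_eraseCorner hc, colLen_eraseCorner hc]
  have hr := rowLen_of_maximal hc
  have hl := colLen_of_maximal hc
  obtain ⟨a, b⟩ := c
  obtain ⟨x, y⟩ := v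
  have := mem_iff_lt_rowLen.1 hv.2
  have := mem_iff_lt_colLen.1 hv.2
  simp only [ne_eq, Prod.mk.injEq] at hv hr hl ⊢
  split_ifs with hx hy hy <;> subst_vars <;> omega

theorem card_standardYoungTableau_eq_sum (hμ : μ.cells.Nonempty) :
    Nat.card {f : μ.cells → Fin μ.card // IsStandardYoungTableau μ f} =
      ∑ c ∈ μ.corners, Nat.card {f : (μ.eraseCorner c).cells → Fin (μ.eraseCorner c).card //
        IsStandardYoungTableau (μ.eraseCorner c) f} := by
  simp only [isStandardYoungTableau_iff]
  dsimp only [YoungDiagram.card]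
  rw [card_linearExtensions_eq_sum_maximal hμ]
  refine sum_congr rfl fun c hc => ?_
  rw [cells_eraseCorner (mem_corners.1 hc)]

theorem card_standardYoungTableau_of_card_eq_zero (hμ : μ.card = 0) :
    Nat.card {f : μ.cells → Fin μ.card // IsStandardYoungTableau μ f} = 1 := by
  simp only [isStandardYoungTableau_iff]
  dsimp only [YoungDiagram.card]
  rw [card_eq_zero.1 hμ]
  exact card_linearExtensions_empty

noncomputable def colHookSubOne (μ : YoungDiagram) (c : ℕ × ℕ) (x : ℕ) : ℚ :=
  hookLength μ x c.2 - 1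

noncomputable def rowHookSubOne (μ : YoungDiagram) (c : ℕ × ℕ) (y : ℕ) : ℚ :=
  hookLength μ c.1 y - 1

noncomputable def cornerRatio (μ : YoungDiagram) (c : ℕ × ℕ) : ℚ :=
  (∏ x ∈ range c.1, (1 + (colHookSubOne μ c x)⁻¹)) *
    ∏ y ∈ range c.2, (1 + (rowHookSubOne μ c y)⁻¹)

theorem colHookSubOne_self (hc : Maximal (· ∈ μ.cells) c) : colHookSubOne μ c c.1 = 0 := by
  simp [colHookSubOne, (maximal_iff_hookLength_eq_one hc.1).1 hc]

theorem rowHookSubOne_self (hc : Maximal (· ∈ μ.cells) c) : rowHookSubOne μ c c.2 = 0 := by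
  simp [rowHookSubOne, (maximal_iff_hookLength_eq_one hc.1).1 hc]

theorem colHookSubOne_ne_zero (hc : Maximal (· ∈ μ.cells) c) {x : ℕ} (hx : x < c.1) :
    colHookSubOne μ c x ≠ 0 := by
  have := one_lt_hookLength_of_lt hc (v := (x, c.2)) (Prod.lt_iff.2 (.inl ⟨hx, le_rfl⟩))
  rw [colHookSubOne, sub_ne_zero]
  exact_mod_cast this.ne'

theorem rowHookSubOne_ne_zero (hc : Maximal (· ∈ μ.cells) c) {y : ℕ} (hy : y < c.2) :
    rowHookSubOne μ c y ≠ 0 := by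
  have := one_lt_hookLength_of_lt hc (v := (c.1, y)) (Prod.lt_iff.2 (.inr ⟨le_rfl, hy⟩))
  rw [rowHookSubOne, sub_ne_zero]
  exact_mod_cast this.ne'

theorem colHookSubOne_add_rowHookSubOne (hc : Maximal (· ∈ μ.cells) c) (hv : v ≤ c) :
    colHookSubOne μ c v.1 + rowHookSubOne μ c v.2 = hookLength μ v.1 v.2 - 1 := by
  have := mem_iff_lt_rowLen.1 (μ.up_left_mem le_rfl hv.2 hc.1)
  have := mem_iff_lt_colLen.1 (μ.up_left_mem hv.1 le_rfl hc.1)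
  have := rowLen_of_maximal hc
  have := colLen_of_maximal hc
  have := μ.rowLen_anti _ _ hv.1
  have := μ.colLen_anti _ _ hv.2
  have key : hookLength μ v.1 c.2 + hookLength μ c.1 v.2 = hookLength μ v.1 v.2 + 1 := by
    unfold hookLength
    omega
  have key' : (hookLength μ v.1 c.2 + hookLength μ c.1 v.2 : ℚ) = hookLength μ v.1 v.2 + 1 := by
    exact_mod_cast key
  rw [colHookSubOne, rowHookSubOne]
  linear_combination key'

theorem hookLength_div_hookLength_eraseCorner (hc : Maximal (· ∈ μ.cells) c)
    (hv : v ∈ μ.eraseCorner c) :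
    (hookLength μ v.1 v.2 : ℚ) / hookLength (μ.eraseCorner c) v.1 v.2 =
      (if v.2 = c.2 then 1 + (colHookSubOne μ c v.1)⁻¹ else 1) *
        if v.1 = c.1 then 1 + (rowHookSubOne μ c v.2)⁻¹ else 1 := by
  have hpos : (0 : ℚ) < hookLength (μ.eraseCorner c) v.1 v.2 := by
    exact_mod_cast hookLength_pos v.1 v.2
  have h := hookLength_eraseCorner hc hv
  have hne := ((mem_eraseCorner hc).1 hv).1
  obtain ⟨a, b⟩ := c
  obtain ⟨x, y⟩ := v
  dsimp only at *
  split_ifs at h ⊢ with hy hx hx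
  · exact absurd (by rw [hx, hy]) hne
  · subst hy
    rw [colHookSubOne, h]
    push_cast
    field_simp [hpos.ne']
    ring
  · subst hx
    rw [rowHookSubOne, h]
    push_cast
    field_simp [hpos.ne']
    ring
  · rw [h]
    simp [hpos.ne']

theorem prod_hookLength_eq_cornerRatio_mul (hc : Maximal (· ∈ μ.cells) c) :
    ∏ v ∈ μ.cells, (hookLength μ v.1 v.2 : ℚ) =
      cornerRatio μ c *
        ∏ v ∈ (μ.eraseCorner c).cells, (hookLength (μ.eraseCorner c) v.1 v.2 : ℚ) := by
  have hcol : ∏ v ∈ (μ.eraseCorner c).cells,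
      (if v.2 = c.2 then 1 + (colHookSubOne μ c v.1)⁻¹ else 1) =
        ∏ x ∈ range c.1, (1 + (colHookSubOne μ c x)⁻¹) := by
    rw [← prod_filter, show {v ∈ (μ.eraseCorner c).cells | v.2 = c.2} = (μ.eraseCorner c).col c.2
      from rfl, col_eq_prod, colLen_eraseCorner hc, if_pos rfl, colLen_of_maximal hc,
      Nat.add_sub_cancel, prod_product]
    simp
  have hrow : ∏ v ∈ (μ.eraseCorner c).cells,
      (if v.1 = c.1 then 1 + (rowHookSubOne μ c v.2)⁻¹ else 1) =
        ∏ y ∈ range c.2, (1 + (rowHookSubOne μ c y)⁻¹) := by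
    rw [← prod_filter, show {v ∈ (μ.eraseCorner c).cells | v.1 = c.1} = (μ.eraseCorner c).row c.1
      from rfl, row_eq_prod, rowLen_eraseCorner hc, if_pos rfl, rowLen_of_maximal hc,
      Nat.add_sub_cancel, prod_product]
    simp
  calc ∏ v ∈ μ.cells, (hookLength μ v.1 v.2 : ℚ)
      = ∏ v ∈ (μ.eraseCorner c).cells, (hookLength μ v.1 v.2 : ℚ) := by
        rw [cells_eraseCorner hc, ← mul_prod_erase _ _ hc.1,
          (maximal_iff_hookLength_eq_one hc.1).1 hc, Nat.cast_one, one_mul]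
    _ = (∏ v ∈ (μ.eraseCorner c).cells,
          ((hookLength μ v.1 v.2 : ℚ) / hookLength (μ.eraseCorner c) v.1 v.2)) *
          ∏ v ∈ (μ.eraseCorner c).cells, (hookLength (μ.eraseCorner c) v.1 v.2 : ℚ) := by
        rw [← prod_mul_distrib]
        refine prod_congr rfl fun v _ => (div_mul_cancel₀ _ ?_).symm
        exact_mod_cast (hookLength_pos v.1 v.2).ne'
    _ = _ := by
        rw [prod_congr rfl fun v hv => hookLength_div_hookLength_eraseCorner hc hv,
          prod_mul_distrib, hcol, hrow, cornerRatio]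

/-- The probability that the hook walk started at `v` ends at the corner `c`. -/
noncomputable def cornerWeight (μ : YoungDiagram) (c v : ℕ × ℕ) : ℚ :=
  if v ≤ c then
    walkWeight (colHookSubOne μ c) c.1 v.1 * walkWeight (rowHookSubOne μ c) c.2 v.2
  else 0

theorem cornerWeight_of_le (hvc : v ≤ c) :
    cornerWeight μ c v =
      walkWeight (colHookSubOne μ c) c.1 v.1 * walkWeight (rowHookSubOne μ c) c.2 v.2 :=
  if_pos hvc

theorem cornerWeight_of_not_le (hvc : ¬v ≤ c) : cornerWeight μ c v = 0 :=
  if_neg hvc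

theorem cornerWeight_self : cornerWeight μ c c = 1 := by
  simp [cornerWeight, walkWeight]

theorem sum_cornerWeight (hc : Maximal (· ∈ μ.cells) c) :
    ∑ v ∈ μ.cells, cornerWeight μ c v = cornerRatio μ c := by
  have hsub : range (c.1 + 1) ×ˢ range (c.2 + 1) ⊆ μ.cells := fun v hv => by
    simp only [mem_product, mem_range] at hv
    exact μ.up_left_mem (by omega) (by omega) hc.1
  have hcol : ∑ x ∈ range (c.1 + 1), walkWeight (colHookSubOne μ c) c.1 x =
      ∏ x ∈ range c.1, (1 + (colHookSubOne μ c x)⁻¹) := by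
    simpa only [range_eq_Ico] using sum_walkWeight _ _ (Nat.zero_le _)
  have hrow : ∑ y ∈ range (c.2 + 1), walkWeight (rowHookSubOne μ c) c.2 y =
      ∏ y ∈ range c.2, (1 + (rowHookSubOne μ c y)⁻¹) := by
    simpa only [range_eq_Ico] using sum_walkWeight _ _ (Nat.zero_le _)
  rw [← sum_subset hsub fun v _ hv => cornerWeight_of_not_le fun hvc => hv (by
      simpa only [mem_product, mem_range] using ⟨Nat.lt_succ_of_le hvc.1, Nat.lt_succ_of_le hvc.2⟩),
    sum_product, cornerRatio, ← hcol, ← hrow, sum_mul_sum]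
  refine sum_congr rfl fun x hx => sum_congr rfl fun y hy => cornerWeight_of_le ?_
  simp only [mem_range] at hx hy
  exact ⟨by omega, by omega⟩

theorem sum_col_cornerWeight (hc : Maximal (· ∈ μ.cells) c) (hvc : v ≤ c) :
    ∑ i ∈ Ico (v.1 + 1) (μ.colLen v.2), cornerWeight μ c (i, v.2) =
      colHookSubOne μ c v.1 * cornerWeight μ c v := by
  have hcol : c.1 + 1 ≤ μ.colLen v.2 := mem_iff_lt_colLen.1 (μ.up_left_mem le_rfl hvc.2 hc.1)
  rw [← sum_Ico_consecutive _ (Nat.add_le_add_right hvc.1 1) hcol,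
    sum_eq_zero (s := Ico (c.1 + 1) _) fun i hi =>
      cornerWeight_of_not_le fun hic => absurd hic.1 (by rw [mem_Ico] at hi; omega),
    add_zero, cornerWeight_of_le hvc, ← mul_assoc,
    mul_walkWeight _ _ (colHookSubOne_self hc) (fun i => colHookSubOne_ne_zero hc) hvc.1, sum_mul]
  exact sum_congr rfl fun i hi => cornerWeight_of_le ⟨by rw [mem_Ico] at hi; omega, hvc.2⟩

theorem sum_row_cornerWeight (hc : Maximal (· ∈ μ.cells) c) (hvc : v ≤ c) :
    ∑ j ∈ Ico (v.2 + 1) (μ.rowLen v.1), cornerWeight μ c (v.1, j) =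
      rowHookSubOne μ c v.2 * cornerWeight μ c v := by
  have hrow : c.2 + 1 ≤ μ.rowLen v.1 := mem_iff_lt_rowLen.1 (μ.up_left_mem hvc.1 le_rfl hc.1)
  rw [← sum_Ico_consecutive _ (Nat.add_le_add_right hvc.2 1) hrow,
    sum_eq_zero (s := Ico (c.2 + 1) _) fun j hj =>
      cornerWeight_of_not_le fun hjc => absurd hjc.2 (by rw [mem_Ico] at hj; omega),
    add_zero, cornerWeight_of_le hvc, mul_left_comm,
    mul_walkWeight _ _ (rowHookSubOne_self hc) (fun j => rowHookSubOne_ne_zero hc) hvc.2, mul_sum]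
  exact sum_congr rfl fun j hj => cornerWeight_of_le ⟨hvc.1, by rw [mem_Ico] at hj; omega⟩

theorem hookLength_sub_one_mul_cornerWeight (hc : Maximal (· ∈ μ.cells) c) :
    (hookLength μ v.1 v.2 - 1 : ℚ) * cornerWeight μ c v =
      ∑ i ∈ Ico (v.1 + 1) (μ.colLen v.2), cornerWeight μ c (i, v.2) +
        ∑ j ∈ Ico (v.2 + 1) (μ.rowLen v.1), cornerWeight μ c (v.1, j) := by
  by_cases hvc : v ≤ c
  · rw [sum_col_cornerWeight hc hvc, sum_row_cornerWeight hc hvc, ← add_mul,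
      colHookSubOne_add_rowHookSubOne hc hvc]
  · have hzero (u : ℕ × ℕ) (hvu : v ≤ u) : cornerWeight μ c u = 0 :=
      cornerWeight_of_not_le fun huc => hvc (hvu.trans huc)
    rw [hzero v le_rfl, mul_zero,
      sum_eq_zero fun i hi => hzero (i, v.2) ⟨by rw [mem_Ico] at hi; omega, le_rfl⟩,
      sum_eq_zero fun j hj => hzero (v.1, j) ⟨le_rfl, by rw [mem_Ico] at hj; omega⟩, add_zero]

theorem sum_corners_cornerWeight (hv : v ∈ μ) : ∑ c ∈ μ.corners, cornerWeight μ c v = 1 := by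
  induction hn : hookLength μ v.1 v.2 using Nat.strong_induction_on generalizing v with
  | _ n ih =>
  by_cases hmax : Maximal (· ∈ μ.cells) v
  · refine (sum_eq_single_of_mem v (mem_corners.2 hmax) fun c hc hne =>
      cornerWeight_of_not_le fun hvc => hne ?_).trans cornerWeight_self
    exact le_antisymm (hmax.2 (mem_corners.1 hc).1 hvc) hvc
  have hhook (u : ℕ × ℕ) (hvu : v < u) (hu : u ∈ μ) : ∑ c ∈ μ.corners, cornerWeight μ c u = 1 :=
    ih _ (hn ▸ hookLength_lt_of_lt hu hvu) hu rfl
  have hcol : ∀ i ∈ Ico (v.1 + 1) (μ.colLen v.2),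
      ∑ c ∈ μ.corners, cornerWeight μ c (i, v.2) = 1 := fun i hi => by
    rw [mem_Ico] at hi
    exact hhook _ (Prod.lt_iff.2 (.inl ⟨hi.1, le_rfl⟩)) (mem_iff_lt_colLen.2 hi.2)
  have hrow : ∀ j ∈ Ico (v.2 + 1) (μ.rowLen v.1),
      ∑ c ∈ μ.corners, cornerWeight μ c (v.1, j) = 1 := fun j hj => by
    rw [mem_Ico] at hj
    exact hhook _ (Prod.lt_iff.2 (.inr ⟨le_rfl, hj.1⟩)) (mem_iff_lt_rowLen.2 hj.2)
  have hrec : (n - 1 : ℚ) * ∑ c ∈ μ.corners, cornerWeight μ c v = n - 1 := by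
    rw [← hn, mul_sum, sum_congr rfl fun c hc => hookLength_sub_one_mul_cornerWeight
      (mem_corners.1 hc), sum_add_distrib, sum_comm, sum_comm (s := μ.corners),
      sum_congr rfl hcol, sum_congr rfl hrow, hookLength]
    simp [add_comm]
  have hn1 : (n - 1 : ℚ) ≠ 0 := by
    rw [sub_ne_zero, Ne, Nat.cast_eq_one, ← hn, ← maximal_iff_hookLength_eq_one hv]
    exact hmax
  exact mul_left_cancel₀ hn1 (hrec.trans (mul_one _).symm)

theorem sum_cornerRatio : ∑ c ∈ μ.corners, cornerRatio μ c = μ.card := by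
  rw [sum_congr rfl fun c hc => (sum_cornerWeight (mem_corners.1 hc)).symm, sum_comm,
    sum_congr rfl fun v hv => sum_corners_cornerWeight hv, sum_const, nsmul_one]

theorem card_standardYoungTableau_mul_prod_hookLength (μ : YoungDiagram) :
    (Nat.card {f : μ.cells → Fin μ.card // IsStandardYoungTableau μ f} : ℚ) *
      ∏ v ∈ μ.cells, (hookLength μ v.1 v.2 : ℚ) = μ.card ! := by
  obtain ⟨n, hn⟩ : ∃ n, μ.card = n := ⟨_, rfl⟩
  induction n generalizing μ with
  | zero => simp [card_standardYoungTableau_of_card_eq_zero hn, card_eq_zero.1 hn, hn]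
  | succ n ih =>
    have hcard {c : ℕ × ℕ} (hc : c ∈ μ.corners) : (μ.eraseCorner c).card = n := by
      simp [YoungDiagram.card, cells_eraseCorner (mem_corners.1 hc),
        card_erase_of_mem (mem_corners.1 hc).1, hn]
    calc _ = ∑ c ∈ μ.corners, (n ! : ℚ) * cornerRatio μ c := by
          rw [card_standardYoungTableau_eq_sum (card_pos.1 (show 0 < μ.card by omega)),
            Nat.cast_sum, sum_mul]
          refine sum_congr rfl fun c hc => ?_
          rw [prod_hookLength_eq_cornerRatio_mul (mem_corners.1 hc), mul_left_comm,
            ih _ (hcard hc), hcard hc, mul_comm]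
      _ = μ.card ! := by
          rw [← mul_sum, sum_cornerRatio, hn, Nat.factorial_succ]
          push_cast
          ring

end YoungDiagram

/-- Hook length formula: the number of standard Young tableaux of shape `μ` (that is,
the dimension `χ^μ(e)` of the irreducible representation of `S_n` indexed by `μ`)
equals `n! / ∏_{(i,j) ∈ μ} h_{i,j}`, stated multiplicatively. -/
theorem hook_length_formula (μ : YoungDiagram) :
    Nat.card {f : {c : ℕ × ℕ // c ∈ μ.cells} → Fin μ.card // IsStandardYoungTableau μ f} *
      ∏ c ∈ μ.cells, hookLength μ c.1 c.2 = Nat.factorial μ.card := by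
  exact_mod_cast YoungDiagram.card_standardYoungTableau_mul_prod_hookLength μ
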